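/- Let Γ ∈ ℝ^{p×p} be symmetric positive definite, V : ℝⁿ × ℝᵖ → ℝ smooth and nonnegative, μ : ℝⁿ × ℝᵖ → ℝᵐ and ν : ℝⁿ × ℝᵖ → ℝ≥0 with ⟨∇ₓV(x,ϑ), f(x) + F(x)(ϑ + Γ ∇_ϑ V(x,ϑ)) + g(x) μ(x,ϑ)⟩ ≤ −ν(x,ϑ) for all x, ϑ. Assume there is a class-K∞ function α₁ with α₁(‖x‖) ≤ V(x,ϑ) for all x ∈ ℝⁿ, ϑ ∈ ℝᵖ. Fix θ ∈ ℝᵖ and let (x(·), θ̂(·)) be a differentiable solution on [0,∞) of ẋ = f(x) + F(x)θ + g(x) μ(x, θ̂), θ̂' = Γ F(x)ᵀ ∇ₓV(x, θ̂). Then, with V_c(t) := V(x(t), θ̂(t)) + ½ (θ − θ̂(t))ᵀ Γ⁻¹ (θ − θ̂(t)), for every t ≥ 0 one has α₁(‖x(t)‖) ≤ V_c(0) and ½ λ_min(Γ⁻¹) ‖θ − θ̂(t)‖² ≤ V_c(0); in particular the state x(·) and the parameter estimate θ̂(·) are bounded. -/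

import Mathlib

open scoped RealInnerProductSpace
open Set Matrix

noncomputable section

/-- `ℝⁿ` with the Euclidean norm. -/
abbrev Evec (n : ℕ) := EuclideanSpace ℝ (Fin n)

/-- Action of a real `m × n` matrix on a Euclidean vector. -/
noncomputable def mVec {m n : ℕ} (A : Matrix (Fin m) (Fin n) ℝ) (v : Evec n) : Evec m :=
  (EuclideanSpace.equiv (Fin m) ℝ).symm (A.mulVec ((EuclideanSpace.equiv (Fin n) ℝ) v))

/-- A class-`K` function: continuous, strictly increasing on `[0,∞)` and vanishing at `0`. -/
def IsClassK (α : ℝ → ℝ) : Prop :=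
  ContinuousOn α (Ici 0) ∧ StrictMonoOn α (Ici 0) ∧ α 0 = 0 ∧ ∀ s ≥ (0:ℝ), 0 ≤ α s

/-- A class-`K∞` function: class `K` and unbounded. -/
def IsClassKInf (α : ℝ → ℝ) : Prop :=
  IsClassK α ∧ Filter.Tendsto α Filter.atTop Filter.atTop

lemma mVec_apply {m n : ℕ} (A : Matrix (Fin m) (Fin n) ℝ) (v : Evec n) (i : Fin m) :
    mVec A v i = A.mulVec v i := rfl

lemma inner_mVec {m n : ℕ} (A : Matrix (Fin m) (Fin n) ℝ) (u : Evec m) (v : Evec n) :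
    ⟪u, mVec A v⟫ = ⟪mVec Aᵀ u, v⟫ := by
  simp only [PiLp.inner_apply, RCLike.inner_apply, conj_trivial, mVec_apply]
  rw [show ∑ i, A.mulVec v i * u i = A.mulVec v ⬝ᵥ u from rfl, dotProduct_comm,
    dotProduct_mulVec, show ∀ w : Fin n → ℝ, dotProduct w v = ∑ i, w i * v i
      from fun _ => rfl]
  congr 1
  ext i
  rw [← Matrix.mulVec_transpose, mul_comm]

lemma mVec_mVec {m n k : ℕ} (A : Matrix (Fin m) (Fin n) ℝ) (B : Matrix (Fin n) (Fin k) ℝ)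
    (v : Evec k) : mVec A (mVec B v) = mVec (A * B) v := by
  ext i
  show (A *ᵥ (B *ᵥ v)) i = ((A * B) *ᵥ v) i
  rw [Matrix.mulVec_mulVec]

lemma mVec_add {m n : ℕ} (A : Matrix (Fin m) (Fin n) ℝ) (u v : Evec n) :
    mVec A (u + v) = mVec A u + mVec A v := by
  ext i
  show (A *ᵥ (fun j => u j + v j)) i = (A *ᵥ u) i + (A *ᵥ v) i
  simp [Matrix.mulVec, dotProduct, mul_add, Finset.sum_add_distrib]

lemma mVec_sub {m n : ℕ} (A : Matrix (Fin m) (Fin n) ℝ) (u v : Evec n) :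
    mVec A (u - v) = mVec A u - mVec A v := by
  ext i
  show (A *ᵥ (fun j => u j - v j)) i = (A *ᵥ u) i - (A *ᵥ v) i
  simp [Matrix.mulVec, dotProduct, mul_sub, Finset.sum_sub_distrib]

lemma mVec_zero {m n : ℕ} (A : Matrix (Fin m) (Fin n) ℝ) :
    mVec A (0 : Evec n) = 0 := by
  ext i
  show (A *ᵥ (fun _ => 0)) i = 0
  simp [Matrix.mulVec, dotProduct]

lemma mVec_one {n : ℕ} (v : Evec n) : mVec (1 : Matrix (Fin n) (Fin n) ℝ) v = v := by
  ext i; simp [mVec_apply]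

lemma mVec_eq_lin {m n : ℕ} (A : Matrix (Fin m) (Fin n) ℝ) (v : Evec n) :
    mVec A v = LinearMap.toContinuousLinearMap (Matrix.toEuclideanLin A) v := rfl

lemma HasDerivWithinAt.mVec_comp {n k : ℕ} {c : ℝ → Evec k} {c' : Evec k} {s : Set ℝ} {t : ℝ}
    (A : Matrix (Fin n) (Fin k) ℝ) (hc : HasDerivWithinAt c c' s t) :
    HasDerivWithinAt (fun τ => mVec A (c τ)) (mVec A c') s t := by
  exact
    ((LinearMap.toContinuousLinearMap (Matrix.toEuclideanLin A)).hasFDerivAt).comp_hasDerivWithinAt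
      t hc

lemma grad_fst {n p : ℕ} (V : Evec n → Evec p → ℝ)
    (hV : ContDiff ℝ (⊤ : ℕ∞) (fun q : Evec n × Evec p => V q.1 q.2)) (a : Evec n) (b : Evec p)
    (u : Evec n) :
    (fderiv ℝ (fun q : Evec n × Evec p => V q.1 q.2) (a, b)) (u, 0)
      = ⟪gradient (fun y => V y b) a, u⟫ := by
  have hf : HasFDerivAt (fun q : Evec n × Evec p => V q.1 q.2)
      (fderiv ℝ (fun q : Evec n × Evec p => V q.1 q.2) (a, b)) (a, b) :=
    (hV.differentiable (by simp) (a, b)).hasFDerivAt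
  have h1 : HasFDerivAt (fun y : Evec n => (y, b))
      ((ContinuousLinearMap.id ℝ (Evec n)).prod 0) a :=
    (hasFDerivAt_id a).prodMk (hasFDerivAt_const b a)
  have hcomp : HasFDerivAt (fun y => V y b)
      ((fderiv ℝ (fun q : Evec n × Evec p => V q.1 q.2) (a, b)).comp
        ((ContinuousLinearMap.id ℝ (Evec n)).prod 0)) a := by have := hf.comp a h1; exact this
  rw [hcomp.hasGradientAt.gradient, InnerProductSpace.toDual_symm_apply]
  simp

lemma grad_snd {n p : ℕ} (V : Evec n → Evec p → ℝ)
    (hV : ContDiff ℝ (⊤ : ℕ∞) (fun q : Evec n × Evec p => V q.1 q.2)) (a : Evec n) (b : Evec p)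
    (v : Evec p) :
    (fderiv ℝ (fun q : Evec n × Evec p => V q.1 q.2) (a, b)) (0, v)
      = ⟪gradient (fun c => V a c) b, v⟫ := by
  have hf : HasFDerivAt (fun q : Evec n × Evec p => V q.1 q.2)
      (fderiv ℝ (fun q : Evec n × Evec p => V q.1 q.2) (a, b)) (a, b) :=
    (hV.differentiable (by simp) (a, b)).hasFDerivAt
  have h1 : HasFDerivAt (fun c : Evec p => (a, c))
      ((0 : Evec p →L[ℝ] Evec n).prod (ContinuousLinearMap.id ℝ (Evec p))) b :=
    (hasFDerivAt_const a b).prodMk (hasFDerivAt_id b)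
  have hcomp : HasFDerivAt (fun c => V a c)
      ((fderiv ℝ (fun q : Evec n × Evec p => V q.1 q.2) (a, b)).comp
        ((0 : Evec p →L[ℝ] Evec n).prod (ContinuousLinearMap.id ℝ (Evec p)))) b := hf.comp b h1
  rw [hcomp.hasGradientAt.gradient, InnerProductSpace.toDual_symm_apply]
  simp

lemma eig_lower {p : ℕ} {M : Matrix (Fin p) (Fin p) ℝ} (hM : M.IsHermitian) (v : Evec p) :
    (⨅ i, hM.eigenvalues i) * ‖v‖ ^ 2 ≤ ⟪v, mVec M v⟫ := by
  have hMT : Mᵀ = M := by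
    rw [← Matrix.conjTranspose_eq_transpose_of_trivial, hM.eq]
  have hMb : ∀ i : Fin p, mVec M (hM.eigenvectorBasis i)
      = hM.eigenvalues i • hM.eigenvectorBasis i := by
    intro i
    ext j
    have := congrFun (hM.mulVec_eigenvectorBasis i) j
    simpa [mVec_apply] using this
  have hinner : ∀ i, ⟪hM.eigenvectorBasis i, mVec M v⟫
      = hM.eigenvalues i * ⟪hM.eigenvectorBasis i, v⟫ := by
    intro i
    rw [inner_mVec, hMT, hMb i, real_inner_smul_left]
  have hsum := (hM.eigenvectorBasis).sum_inner_mul_inner v (mVec M v)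
  have hnorm : ‖v‖ ^ 2 = ∑ i, ⟪v, hM.eigenvectorBasis i⟫ * ⟪hM.eigenvectorBasis i, v⟫ := by
    rw [(hM.eigenvectorBasis).sum_inner_mul_inner v v, real_inner_self_eq_norm_sq]
  rw [← hsum, hnorm, Finset.mul_sum]
  apply Finset.sum_le_sum
  intro i _
  rw [hinner i, real_inner_comm v]
  have h1 : (0:ℝ) ≤ ⟪hM.eigenvectorBasis i, v⟫ * ⟪hM.eigenvectorBasis i, v⟫ := mul_self_nonneg _
  have h2 : (⨅ j, hM.eigenvalues j) ≤ hM.eigenvalues i :=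
    ciInf_le (Finite.bddBelow_range _) i
  nlinarith

/-- Along closed-loop solutions, `α₁(‖x(t)‖) ≤ V_c(0)` and
`½ λ_min(Γ⁻¹) ‖θ − θ̂(t)‖² ≤ V_c(0)`; in particular state and estimate are bounded. -/
theorem stmt1
    {n m p : ℕ}
    (f : Evec n → Evec n) (F : Evec n → Matrix (Fin n) (Fin p) ℝ)
    (g : Evec n → Matrix (Fin n) (Fin m) ℝ)
    (Γ : Matrix (Fin p) (Fin p) ℝ) (hΓ : Γ.PosDef)
    (V : Evec n → Evec p → ℝ)
    (hV : ContDiff ℝ (⊤ : ℕ∞) (fun q : Evec n × Evec p => V q.1 q.2))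
    (hVnn : ∀ x ϑ, 0 ≤ V x ϑ)
    (μ : Evec n → Evec p → Evec m) (ν : Evec n → Evec p → ℝ)
    (hνnn : ∀ x ϑ, 0 ≤ ν x ϑ)
    (hACLF : ∀ x ϑ,
      ⟪gradient (fun y => V y ϑ) x,
        f x + mVec (F x) (ϑ + mVec Γ (gradient (fun ϑ' => V x ϑ') ϑ))
          + mVec (g x) (μ x ϑ)⟫ ≤ -(ν x ϑ))
    (α₁ : ℝ → ℝ) (hα₁ : IsClassKInf α₁)
    (hα₁V : ∀ (x : Evec n) (ϑ : Evec p), α₁ ‖x‖ ≤ V x ϑ)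
    (θ : Evec p) (x : ℝ → Evec n) (θh : ℝ → Evec p)
    (hx : ∀ t ∈ Ici (0:ℝ), HasDerivWithinAt x
      (f (x t) + mVec (F (x t)) θ + mVec (g (x t)) (μ (x t) (θh t))) (Ici 0) t)
    (hθ : ∀ t ∈ Ici (0:ℝ), HasDerivWithinAt θh
      (mVec Γ (mVec (F (x t))ᵀ (gradient (fun y => V y (θh t)) (x t)))) (Ici 0) t) :
    (∀ t ∈ Ici (0:ℝ),
        α₁ ‖x t‖ ≤ V (x 0) (θh 0) + (1/2) * ⟪θ - θh 0, mVec Γ⁻¹ (θ - θh 0)⟫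
      ∧ (1/2) * (⨅ i, (hΓ.inv.1.eigenvalues i)) * ‖θ - θh t‖ ^ 2
          ≤ V (x 0) (θh 0) + (1/2) * ⟪θ - θh 0, mVec Γ⁻¹ (θ - θh 0)⟫)
    ∧ ∃ C : ℝ, ∀ t ∈ Ici (0:ℝ), ‖x t‖ ≤ C ∧ ‖θh t‖ ≤ C := by
  obtain ⟨⟨hα₁c, hα₁mono, hα₁0, hα₁nn⟩, hα₁top⟩ := hα₁
  have hΓdet : IsUnit Γ.det := hΓ.det_pos.ne'.isUnit
  have hΓiT : (Γ⁻¹)ᵀ = Γ⁻¹ := by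
    rw [← Matrix.conjTranspose_eq_transpose_of_trivial, hΓ.inv.1.eq]
  have hΓT : Γᵀ = Γ := by
    rw [← Matrix.conjTranspose_eq_transpose_of_trivial, hΓ.1.eq]
  set W : ℝ → ℝ := fun t => V (x t) (θh t) + (1/2) * ⟪θ - θh t, mVec Γ⁻¹ (θ - θh t)⟫ with hWdef
  -- the key derivative computation
  have key : ∀ t ∈ Ici (0:ℝ), ∃ d ≤ 0, HasDerivWithinAt W d (Ici 0) t := by
    intro t ht
    set a := x t with ha
    set b := θh t with hb
    set gx := gradient (fun y => V y b) a with hgx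
    set gϑ := gradient (fun c => V a c) b with hgϑ
    set xd := f a + mVec (F a) θ + mVec (g a) (μ a b) with hxd
    set θd := mVec Γ (mVec (F a)ᵀ gx) with hθd
    set L := fderiv ℝ (fun q : Evec n × Evec p => V q.1 q.2) (a, b) with hL
    -- derivative of the first summand
    have hq : HasDerivWithinAt (fun τ => (x τ, θh τ)) (xd, θd) (Ici 0) t :=
      (hx t ht).prodMk (hθ t ht)
    have hf : HasFDerivAt (fun q : Evec n × Evec p => V q.1 q.2) L (a, b) :=
      (hV.differentiable (by simp) (a, b)).hasFDerivAt
    have h1 : HasDerivWithinAt (fun τ => V (x τ) (θh τ)) (L (xd, θd)) (Ici 0) t :=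
      by have := hf.comp_hasDerivWithinAt t hq; exact this
    -- derivative of the second summand
    have he : HasDerivWithinAt (fun τ => θ - θh τ) (0 - θd) (Ici 0) t :=
      (hasDerivWithinAt_const t _ θ).sub (hθ t ht)
    have hMe : HasDerivWithinAt (fun τ => mVec Γ⁻¹ (θ - θh τ)) (mVec Γ⁻¹ (0 - θd)) (Ici 0) t :=
      he.mVec_comp Γ⁻¹
    have h2 : HasDerivWithinAt (fun τ => ⟪θ - θh τ, mVec Γ⁻¹ (θ - θh τ)⟫)
        (⟪θ - b, mVec Γ⁻¹ (0 - θd)⟫ + ⟪0 - θd, mVec Γ⁻¹ (θ - b)⟫) (Ici 0) t :=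
      HasDerivWithinAt.inner ℝ he hMe
    have hW : HasDerivWithinAt W
        (L (xd, θd) + (1/2) * (⟪θ - b, mVec Γ⁻¹ (0 - θd)⟫ + ⟪0 - θd, mVec Γ⁻¹ (θ - b)⟫))
        (Ici 0) t := h1.add (h2.const_mul (1/2))
    refine ⟨_, ?_, hW⟩
    -- now show the derivative is ≤ 0
    have hsplit : L (xd, θd) = ⟪gx, xd⟫ + ⟪gϑ, θd⟫ := by
      have : (xd, θd) = (xd, (0 : Evec p)) + ((0 : Evec n), θd) := by simp
      rw [this, map_add, grad_fst V hV, grad_snd V hV]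
    have hϑterm : ⟪gϑ, θd⟫ = ⟪gx, mVec (F a) (mVec Γ gϑ)⟫ := by
      rw [hθd, inner_mVec, hΓT, inner_mVec, Matrix.transpose_transpose, real_inner_comm]
    have hΓinv : mVec Γ⁻¹ θd = mVec (F a)ᵀ gx := by
      rw [hθd, mVec_mVec, Matrix.nonsing_inv_mul Γ hΓdet, mVec_one]
    have hsym : ⟪0 - θd, mVec Γ⁻¹ (θ - b)⟫ = ⟪θ - b, mVec Γ⁻¹ (0 - θd)⟫ := by
      rw [inner_mVec, hΓiT, real_inner_comm]
    have hquadterm : (1/2 : ℝ) * (⟪θ - b, mVec Γ⁻¹ (0 - θd)⟫ + ⟪0 - θd, mVec Γ⁻¹ (θ - b)⟫)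
        = -⟪gx, mVec (F a) (θ - b)⟫ := by
      rw [hsym]
      have h0 : mVec Γ⁻¹ (0 - θd) = -(mVec (F a)ᵀ gx) := by
        rw [mVec_sub, mVec_zero, hΓinv, zero_sub]
      rw [h0]
      have : ⟪θ - b, -(mVec (F a)ᵀ gx)⟫ = -⟪θ - b, mVec (F a)ᵀ gx⟫ := by
        rw [inner_neg_right]
      rw [this, inner_mVec, Matrix.transpose_transpose, real_inner_comm]
      ring
    have hcollect : L (xd, θd)
          + (1/2) * (⟪θ - b, mVec Γ⁻¹ (0 - θd)⟫ + ⟪0 - θd, mVec Γ⁻¹ (θ - b)⟫)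
        = ⟪gx, f a + mVec (F a) (b + mVec Γ gϑ) + mVec (g a) (μ a b)⟫ := by
      rw [hsplit, hϑterm, hquadterm]
      rw [← inner_add_right, ← sub_eq_add_neg, ← inner_sub_right]
      congr 1
      rw [hxd, mVec_add, mVec_sub]
      abel
    rw [hcollect]
    exact le_trans (hACLF a b) (neg_nonpos.mpr (hνnn a b))
  -- W is antitone on [0, ∞)
  have hWanti : AntitoneOn W (Ici 0) := by
    apply antitoneOn_of_deriv_nonpos (convex_Ici 0)
    · intro t ht
      obtain ⟨d, _, hW⟩ := key t ht
      exact hW.continuousWithinAt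
    · intro t ht
      rw [interior_Ici] at ht
      obtain ⟨d, _, hW⟩ := key t (mem_Ici.mpr (le_of_lt (mem_Ioi.mp ht)))
      exact (hW.hasDerivAt (Ici_mem_nhds (mem_Ioi.mp ht))).differentiableAt.differentiableWithinAt
    · intro t ht
      rw [interior_Ici] at ht
      obtain ⟨d, hd, hW⟩ := key t (mem_Ici.mpr (le_of_lt (mem_Ioi.mp ht)))
      rw [(hW.hasDerivAt (Ici_mem_nhds (mem_Ioi.mp ht))).deriv]
      exact hd
  have hWle : ∀ t ∈ Ici (0:ℝ), W t ≤ W 0 := fun t ht => hWanti self_mem_Ici ht ht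
  -- nonnegativity of the quadratic form
  have hquadnn : ∀ v : Evec p, 0 ≤ ⟪v, mVec Γ⁻¹ v⟫ := by
    intro v
    have := hΓ.inv.posSemidef.re_dotProduct_nonneg (star v : Fin p → ℝ)
    simpa [PiLp.inner_apply, dotProduct, mVec_apply, mul_comm] using this
  -- the two main inequalities
  have main : ∀ t ∈ Ici (0:ℝ),
      α₁ ‖x t‖ ≤ V (x 0) (θh 0) + (1/2) * ⟪θ - θh 0, mVec Γ⁻¹ (θ - θh 0)⟫
      ∧ (1/2) * (⨅ i, (hΓ.inv.1.eigenvalues i)) * ‖θ - θh t‖ ^ 2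
          ≤ V (x 0) (θh 0) + (1/2) * ⟪θ - θh 0, mVec Γ⁻¹ (θ - θh 0)⟫ := by
    intro t ht
    have hWt := hWle t ht
    constructor
    · calc α₁ ‖x t‖ ≤ V (x t) (θh t) := hα₁V _ _
        _ ≤ W t := by
          have := hquadnn (θ - θh t)
          simp only [hWdef]
          nlinarith
        _ ≤ W 0 := hWt
    · have heig := eig_lower hΓ.inv.1 (θ - θh t)
      calc (1/2) * (⨅ i, (hΓ.inv.1.eigenvalues i)) * ‖θ - θh t‖ ^ 2
          ≤ (1/2) * ⟪θ - θh t, mVec Γ⁻¹ (θ - θh t)⟫ := by nlinarith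
        _ ≤ W t := by
          have := hVnn (x t) (θh t)
          simp only [hWdef]
          nlinarith
        _ ≤ W 0 := hWt
  refine ⟨main, ?_⟩
  -- boundedness
  have hW0eq : V (x 0) (θh 0) + (1/2) * ⟪θ - θh 0, mVec Γ⁻¹ (θ - θh 0)⟫ = W 0 := rfl
  obtain ⟨C₁, hC₁⟩ := (hα₁top.eventually (Filter.eventually_ge_atTop (W 0))).exists_forall_of_atTop
  set C₂ : ℝ := max C₁ 0 with hC₂
  have hxbound : ∀ t ∈ Ici (0:ℝ), ‖x t‖ ≤ C₂ := by
    intro t ht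
    by_contra hcon
    push_neg at hcon
    have h1 : W 0 ≤ α₁ C₂ := hC₁ C₂ (le_max_left _ _)
    have h2 : α₁ C₂ < α₁ ‖x t‖ :=
      hα₁mono (mem_Ici.mpr (le_max_right _ _)) (mem_Ici.mpr (le_trans (le_max_right _ _) hcon.le)) hcon
    have h3 : α₁ ‖x t‖ ≤ W 0 := hW0eq ▸ (main t ht).1
    linarith
  rcases isEmpty_or_nonempty (Fin p) with hemp | hne
  · refine ⟨C₂, fun t ht => ⟨hxbound t ht, ?_⟩⟩
    have : θh t = 0 := Subsingleton.elim _ _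
    rw [this, norm_zero]
    exact le_max_right _ _
  · set lam : ℝ := ⨅ i, hΓ.inv.1.eigenvalues i with hlam
    have hlampos : 0 < lam := by
      obtain ⟨i0, hi0⟩ := exists_eq_ciInf_of_finite (f := fun i => hΓ.inv.1.eigenvalues i)
      rw [hlam, ← hi0]
      exact hΓ.inv.eigenvalues_pos i0
    have hebound : ∀ t ∈ Ici (0:ℝ), ‖θ - θh t‖ ≤ Real.sqrt (2 * W 0 / lam) := by
      intro t ht
      have h1 : (1/2) * lam * ‖θ - θh t‖ ^ 2 ≤ W 0 := hW0eq ▸ (main t ht).2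
      have h2 : ‖θ - θh t‖ ^ 2 ≤ 2 * W 0 / lam := by
        rw [le_div_iff₀ hlampos]
        calc ‖θ - θh t‖ ^ 2 * lam = 2 * (1/2 * lam * ‖θ - θh t‖ ^ 2) := by ring
          _ ≤ 2 * W 0 := by linarith
      rw [show Real.sqrt (2 * W 0 / lam) = Real.sqrt (2 * W 0 / lam) from rfl]
      calc ‖θ - θh t‖ = Real.sqrt (‖θ - θh t‖ ^ 2) := by
            rw [Real.sqrt_sq (norm_nonneg _)]
        _ ≤ Real.sqrt (2 * W 0 / lam) := Real.sqrt_le_sqrt h2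
    refine ⟨max C₂ (‖θ‖ + Real.sqrt (2 * W 0 / lam)), fun t ht => ⟨?_, ?_⟩⟩
    · exact le_trans (hxbound t ht) (le_max_left _ _)
    · have : ‖θh t‖ ≤ ‖θ‖ + ‖θ - θh t‖ := by
        calc ‖θh t‖ = ‖θ - (θ - θh t)‖ := by rw [sub_sub_cancel]
          _ ≤ ‖θ‖ + ‖θ - θh t‖ := norm_sub_le _ _
      exact le_trans (le_trans this (by linarith [hebound t ht])) (le_max_right _ _)
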